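/- Let G be a finite cyclic group of order n ≥ 1 and X the augmentation ideal of ℤ[G], a free ℤ-module of rank n-1. Then there exist G-module homomorphisms e : ℤ → X ⊗_ℤ X and f : X ⊗_ℤ X → ℤ (with ℤ the trivial G-module and G acting diagonally on X ⊗ X) such that f ∘ e : ℤ → ℤ is multiplication by n-1. -/

import Mathlib

open MonoidAlgebra

/-- The augmentation map `ℤ[G] → ℤ` sending each group element to `1`. -/
noncomputable def augMap (G : Type*) [Group G] : MonoidAlgebra ℤ G →ₐ[ℤ] ℤ :=
  MonoidAlgebra.lift ℤ ℤ G 1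

/-- The augmentation ideal `X = ker(aug : ℤ[G] → ℤ)` as a ℤ-submodule of `ℤ[G]`. -/
noncomputable def augIdeal (G : Type*) [Group G] :
    Submodule ℤ (MonoidAlgebra ℤ G) :=
  LinearMap.ker (augMap G).toLinearMap

/-- The action of `g ∈ G` on the augmentation ideal, by left multiplication. -/
noncomputable def augAction {G : Type*} [Group G] (g : G) :
    augIdeal G →ₗ[ℤ] augIdeal G :=
  (LinearMap.mulLeft ℤ (MonoidAlgebra.single g (1 : ℤ))).restrict
    (p := augIdeal G) (q := augIdeal G)
    (by
      intro x hx
      have hx' : augMap G x = 0 := hx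
      have h1 : augMap G (MonoidAlgebra.single g (1 : ℤ)) = 1 := by
        simp [augMap]
      simp only [augIdeal, LinearMap.mem_ker, AlgHom.toLinearMap_apply,
        LinearMap.mulLeft_apply, map_mul, h1, one_mul, hx'])

/-!
An invariant functional on `X ⊗ X` is an invariant bilinear form on `X`. As `1 - σ` maps `ℤ[G]`
onto `X` with kernel spanned by the norm element `N`, which pairs to zero with `X`, the form
`B(x, y) = ⟨x, (1 - σ)⁻¹ y⟩` is well defined and invariant, `⟨-, -⟩` being the standard pairing
of `ℤ[G]`. The tensor `t = ∑ g, (g - 1) ⊗ (g - gσ)` is invariant, since left translation by `h`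
permutes its summands up to `(h - 1) ⊗ ∑ g, (g - gσ) = 0`, and
`B(g - 1, g - gσ) = ⟨g - 1, g⟩ = [g ≠ 1]`. So `e m = m • t` and `f = B` give
`f (e m) = (n - 1) m`.
-/

open TensorProduct

section AugmentationIdeal

variable {G : Type*} [Group G]

lemma augMap_single (g : G) (a : ℤ) : augMap G (single g a) = a := by
  simp [augMap]

lemma coe_augAction (g : G) (x : augIdeal G) :
    (augAction g x : MonoidAlgebra ℤ G) = single g 1 * (x : MonoidAlgebra ℤ G) := rfl

noncomputable def augRep (G : Type*) [Group G] : Representation ℤ G (augIdeal G) where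
  toFun := augAction
  map_one' := LinearMap.ext fun x ↦ Subtype.ext <| by simp [coe_augAction, ← one_def]
  map_mul' g h := LinearMap.ext fun x ↦ Subtype.ext <| by
    simp only [Module.End.mul_apply, coe_augAction, ← mul_assoc, single_mul_single, mul_one]

lemma augRep_tprod_apply (g : G) :
    (augRep G).tprod (augRep G) g = TensorProduct.map (augAction g) (augAction g) := rfl

noncomputable def augSubOne (g : G) : augIdeal G :=
  ⟨single g 1 - single 1 1, by simp [augIdeal, augMap_single]⟩

lemma coe_augSubOne (g : G) : (augSubOne g : MonoidAlgebra ℤ G) = single g 1 - single 1 1 := rfl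

lemma augAction_augSubOne (h g : G) :
    augAction h (augSubOne g) = augSubOne (h * g) - augSubOne h := by
  ext1
  simp [coe_augAction, coe_augSubOne, mul_sub]

noncomputable def diagTensor [Fintype G] (σ : G) : augIdeal G ⊗[ℤ] augIdeal G :=
  ∑ g, augSubOne g ⊗ₜ (augSubOne g - augSubOne (g * σ))

lemma diagTensor_mem_invariants [Fintype G] (σ : G) :
    diagTensor σ ∈ ((augRep G).tprod (augRep G)).invariants := by
  intro h
  have hsum : ∑ g, (augSubOne (h * g) - augSubOne (h * g * σ)) = 0 := by
    rw [Finset.sum_sub_distrib, sub_eq_zero]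
    exact (Fintype.sum_equiv (Equiv.mulRight σ) _ _ fun g ↦ by simp [mul_assoc]).symm
  simp only [diagTensor, augRep_tprod_apply, map_sum, map_tmul, map_sub, augAction_augSubOne,
    sub_sub_sub_cancel_right, sub_tmul, Finset.sum_sub_distrib, ← tmul_sum, ← mul_assoc, hsum,
    tmul_zero, sub_zero]
  exact Fintype.sum_equiv (Equiv.mulLeft h) _ _ fun g ↦ rfl

end AugmentationIdeal

section KernelPairing

variable {G : Type*}

noncomputable def kernelPairing (b : G → G → ℤ) :
    MonoidAlgebra ℤ G →ₗ[ℤ] MonoidAlgebra ℤ G →ₗ[ℤ] ℤ :=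
  (MonoidAlgebra.basis G ℤ).constr ℤ fun g ↦ (MonoidAlgebra.basis G ℤ).constr ℤ (b g)

lemma kernelPairing_single_single (b : G → G → ℤ) (g h : G) :
    kernelPairing b (single g 1) (single h 1) = b g h := by
  simp only [kernelPairing, ← MonoidAlgebra.basis_apply, Module.Basis.constr_basis]

variable [Group G]

lemma kernelPairing_augSubOne (b : G → G → ℤ) (g h : G) :
    kernelPairing b (augSubOne g) (augSubOne h) = b g h - b g 1 - b 1 h + b 1 1 := by
  simp only [coe_augSubOne, map_sub, LinearMap.sub_apply, kernelPairing_single_single]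
  ring

lemma kernelPairing_single_mul_single_mul {b : G → G → ℤ} {σ : G} (u v : G → ℤ)
    (hb : ∀ g h, b (σ * g) (σ * h) = b g h + u h - v g) {x y : MonoidAlgebra ℤ G}
    (hx : x ∈ augIdeal G) (hy : y ∈ augIdeal G) :
    kernelPairing b (single σ 1 * x) (single σ 1 * y) = kernelPairing b x y := by
  let e := MonoidAlgebra.basis G ℤ
  have key : (kernelPairing b).compl₁₂ (LinearMap.mulLeft ℤ (single σ 1))
      (LinearMap.mulLeft ℤ (single σ 1)) = kernelPairing b
        + (LinearMap.mul ℤ ℤ).compl₁₂ (augMap G).toLinearMap (e.constr ℤ u)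
        - (LinearMap.mul ℤ ℤ).compl₁₂ (e.constr ℤ v) (augMap G).toLinearMap := by
    refine LinearMap.ext_basis e e fun g h ↦ ?_
    simp only [LinearMap.compl₁₂_apply, LinearMap.add_apply, LinearMap.sub_apply,
      LinearMap.mul_apply', AlgHom.toLinearMap_apply, LinearMap.mulLeft_apply,
      Module.Basis.constr_basis]
    simp only [e, MonoidAlgebra.basis_apply, single_mul_single, mul_one,
      kernelPairing_single_single, augMap_single, hb]
    ring
  have hx' : augMap G x = 0 := hx
  have hy' : augMap G y = 0 := hy
  simpa [hx', hy'] using congr($key x y)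

noncomputable def augPairing (b : G → G → ℤ) : augIdeal G →ₗ[ℤ] augIdeal G →ₗ[ℤ] ℤ :=
  (kernelPairing b).compl₁₂ (augIdeal G).subtype (augIdeal G).subtype

end KernelPairing

lemma Representation.comp_eq_of_forall_mem_zpowers {k G V W : Type*} [CommSemiring k] [Group G]
    [Finite G] [AddCommMonoid V] [Module k V] [AddCommMonoid W] [Module k W]
    (ρ : Representation k G V) {σ : G} (hgen : ∀ g : G, g ∈ Subgroup.zpowers σ)
    {f : V →ₗ[k] W} (hf : f ∘ₗ ρ σ = f) (g : G) : f ∘ₗ ρ g = f := by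
  obtain ⟨i, rfl⟩ := mem_powers_iff_mem_zpowers.2 (hgen g)
  change f ∘ₗ ρ (σ ^ i) = f
  induction i with
  | zero => rw [pow_zero, map_one, Module.End.one_eq_id, LinearMap.comp_id]
  | succ i ih => rw [pow_succ, map_mul, Module.End.mul_eq_comp, ← LinearMap.comp_assoc, ih, hf]

section CyclicLog

variable {G : Type*} [Group G] [Finite G] {σ : G} (hgen : ∀ g : G, g ∈ Subgroup.zpowers σ)

noncomputable def cyclicLog (g : G) : ℕ :=
  (finEquivZPowers (isOfFinOrder_of_finite σ)).symm ⟨g, hgen g⟩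

lemma pow_cyclicLog (g : G) : σ ^ cyclicLog hgen g = g :=
  pow_finEquivZPowers_symm_apply _ ⟨g, hgen g⟩

lemma cyclicLog_lt (g : G) : cyclicLog hgen g < orderOf σ := Fin.is_lt _

lemma cyclicLog_pow (i : ℕ) : cyclicLog hgen (σ ^ i) = i % orderOf σ :=
  congrArg Fin.val (finEquivZPowers_symm_apply _ i)

lemma cyclicLog_eq_zero_iff (g : G) : cyclicLog hgen g = 0 ↔ g = 1 := by
  refine ⟨fun h ↦ ?_, ?_⟩
  · rw [← pow_cyclicLog hgen g, h, pow_zero]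
  · rintro rfl
    simpa using cyclicLog_pow hgen 0

lemma cyclicLog_pow_add_one {i : ℕ} (hi : i < orderOf σ) :
    cyclicLog hgen (σ ^ (i + 1)) = if i + 1 = orderOf σ then 0 else i + 1 := by
  rw [cyclicLog_pow]
  split_ifs with h
  · rw [h, Nat.mod_self]
  · exact Nat.mod_eq_of_lt (by omega)

lemma cyclicLog_mul_left (g : G) : cyclicLog hgen (σ * g) =
    if cyclicLog hgen g + 1 = orderOf σ then 0 else cyclicLog hgen g + 1 := by
  conv_lhs => rw [← pow_cyclicLog hgen g, ← pow_succ']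
  exact cyclicLog_pow_add_one hgen (cyclicLog_lt hgen g)

lemma cyclicLog_mul_right (g : G) : cyclicLog hgen (g * σ) =
    if cyclicLog hgen g + 1 = orderOf σ then 0 else cyclicLog hgen g + 1 := by
  conv_lhs => rw [← pow_cyclicLog hgen g, ← pow_succ]
  exact cyclicLog_pow_add_one hgen (cyclicLog_lt hgen g)

/-- The kernel of `B(x, y) = ⟨x, (1 - σ)⁻¹ y⟩`: taking the preimage `z` of `y` with `z 1 = 0`, its
coefficient at `σ ^ i` is the partial sum `∑ j ∈ [1, i], y (σ ^ j)`. -/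
noncomputable def cyclicKernel (g h : G) : ℤ :=
  if 1 ≤ cyclicLog hgen h ∧ cyclicLog hgen h ≤ cyclicLog hgen g then 1 else 0

lemma cyclicKernel_mul_mul (g h : G) :
    cyclicKernel hgen (σ * g) (σ * h) = cyclicKernel hgen g h
      + (if cyclicLog hgen h = 0 then 1 else 0)
      - (if cyclicLog hgen (σ * g) = 0 then 1 else 0) := by
  have := cyclicLog_lt hgen g
  have := cyclicLog_lt hgen h
  simp only [cyclicKernel, cyclicLog_mul_left]
  grind

lemma cyclicKernel_one_left (h : G) : cyclicKernel hgen 1 h = 0 := by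
  simp only [cyclicKernel, (cyclicLog_eq_zero_iff hgen 1).2 rfl]
  grind

lemma cyclicKernel_one_right (g : G) : cyclicKernel hgen g 1 = 0 := by
  simp [cyclicKernel, (cyclicLog_eq_zero_iff hgen 1).2 rfl]

lemma cyclicKernel_self (g : G) :
    cyclicKernel hgen g g = if cyclicLog hgen g = 0 then 0 else 1 := by
  simp only [cyclicKernel]
  grind

lemma cyclicKernel_mul_right_self (g : G) : cyclicKernel hgen g (g * σ) = 0 := by
  have := cyclicLog_lt hgen g
  simp only [cyclicKernel, cyclicLog_mul_right]
  grind

end CyclicLog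

section CyclicFunctional

variable {G : Type*} [Group G] [Finite G] {σ : G} (hgen : ∀ g : G, g ∈ Subgroup.zpowers σ)

noncomputable def cyclicFunctional : augIdeal G ⊗[ℤ] augIdeal G →ₗ[ℤ] ℤ :=
  lift (augPairing (cyclicKernel hgen))

lemma cyclicFunctional_comp_tprod (g : G) :
    cyclicFunctional hgen ∘ₗ (augRep G).tprod (augRep G) g = cyclicFunctional hgen := by
  refine ((augRep G).tprod (augRep G)).comp_eq_of_forall_mem_zpowers hgen ?_ g
  refine TensorProduct.ext' fun x y ↦ ?_
  exact kernelPairing_single_mul_single_mul (fun h ↦ if cyclicLog hgen h = 0 then 1 else 0)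
    (fun g ↦ if cyclicLog hgen (σ * g) = 0 then 1 else 0) (cyclicKernel_mul_mul hgen) x.2 y.2

lemma cyclicFunctional_augSubOne_tmul (g h : G) :
    cyclicFunctional hgen (augSubOne g ⊗ₜ augSubOne h) = cyclicKernel hgen g h := by
  -- not `rw [lift.tmul]`: the declared type carries the `ℤ`-module `AddCommGroup.toIntModule`
  change kernelPairing (cyclicKernel hgen) (augSubOne g) (augSubOne h) = _
  simp only [kernelPairing_augSubOne, cyclicKernel_one_left, cyclicKernel_one_right, sub_zero,
    add_zero]

lemma cyclicFunctional_diagTensor [Fintype G] :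
    cyclicFunctional hgen (diagTensor σ) = Fintype.card G - 1 := by
  classical
  simp only [diagTensor, map_sum, tmul_sub, map_sub, cyclicFunctional_augSubOne_tmul,
    cyclicKernel_self, cyclicKernel_mul_right_self, sub_zero, cyclicLog_eq_zero_iff]
  simp [Finset.sum_ite, Finset.filter_ne', Finset.card_univ, Nat.cast_pred Fintype.card_pos]

end CyclicFunctional

theorem stmt4_general (n : ℕ) (G : Type*) [Group G] [Fintype G]
    (σ : G) (hgen : ∀ g : G, g ∈ Subgroup.zpowers σ) (hcard : Fintype.card G = n) :
    ∃ (e : ℤ →ₗ[ℤ] TensorProduct ℤ (augIdeal G) (augIdeal G))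
      (f : TensorProduct ℤ (augIdeal G) (augIdeal G) →ₗ[ℤ] ℤ),
      (∀ (g : G) (m : ℤ),
        TensorProduct.map (augAction g) (augAction g) (e m) = e m) ∧
      (∀ (g : G) (t : TensorProduct ℤ (augIdeal G) (augIdeal G)),
        f (TensorProduct.map (augAction g) (augAction g) t) = f t) ∧
      (∀ m : ℤ, f (e m) = ((n : ℤ) - 1) * m) := by
  refine ⟨LinearMap.toSpanSingleton ℤ _ (diagTensor σ), cyclicFunctional hgen,
    fun g m ↦ ?_, fun g t ↦ ?_, fun m ↦ ?_⟩
  · rw [LinearMap.toSpanSingleton_apply, map_zsmul, ← augRep_tprod_apply,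
      diagTensor_mem_invariants σ g]
  · exact LinearMap.congr_fun (cyclicFunctional_comp_tprod hgen g) t
  · rw [LinearMap.toSpanSingleton_apply, map_zsmul, cyclicFunctional_diagTensor, hcard,
      smul_eq_mul, mul_comm]

/-- Let `G` be a finite cyclic group of order `n ≥ 1` and `X` the
augmentation ideal of `ℤ[G]`. Then there exist `G`-module homomorphisms
`e : ℤ → X ⊗ X` and `f : X ⊗ X → ℤ` (trivial action on `ℤ`, diagonal action on
`X ⊗ X`) such that `f ∘ e` is multiplication by `n - 1`. -/
theorem stmt4 (n : ℕ) (hn : 1 ≤ n) (G : Type*) [Group G] [Fintype G]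
    (σ : G) (hgen : ∀ g : G, g ∈ Subgroup.zpowers σ) (hcard : Fintype.card G = n) :
    ∃ (e : ℤ →ₗ[ℤ] TensorProduct ℤ (augIdeal G) (augIdeal G))
      (f : TensorProduct ℤ (augIdeal G) (augIdeal G) →ₗ[ℤ] ℤ),
      (∀ (g : G) (m : ℤ),
        TensorProduct.map (augAction g) (augAction g) (e m) = e m) ∧
      (∀ (g : G) (t : TensorProduct ℤ (augIdeal G) (augIdeal G)),
        f (TensorProduct.map (augAction g) (augAction g) t) = f t) ∧
      (∀ m : ℤ, f (e m) = ((n : ℤ) - 1) * m) :=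
  stmt4_general n G σ hgen hcard
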